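/- For every k ≥ 1, the class of languages of deterministic k-VASS with coverability acceptance is strictly contained in the class of languages of history-deterministic k-VASS with coverability acceptance, which in turn is strictly contained in the class of languages of nondeterministic k-VASS with coverability acceptance. -/

import Mathlib

open scoped Classical

/-- A `k`-dimensional vector addition system with states over alphabet `A`.
States are `Fin n`; transitions are labelled by a letter and an effect in `ℤ^k`. -/
structure VASS (k : ℕ) (A : Type) where
  n : ℕ
  trans : Set (Fin n × A × (Fin k → ℤ) × Fin n)
  init : Fin n
  acc : Set (Fin n)

namespace VASS

variable {k : ℕ} {A : Type}

/-- A configuration: a state together with counters in `ℕ^k`. -/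
abbrev Conf (V : VASS k A) := Fin V.n × (Fin k → ℕ)

/-- `Run V c w c'`: there is a valid run of `V` from configuration `c` to `c'`
reading the word `w`, with counters staying nonnegative throughout. -/
inductive Run (V : VASS k A) : V.Conf → List A → V.Conf → Prop
  | nil (c : V.Conf) : Run V c [] c
  | cons {q : Fin V.n} {v : Fin k → ℕ} {a : A} {d : Fin k → ℤ} {q' : Fin V.n}
      {w : List A} {c' : V.Conf} :
      (q, a, d, q') ∈ V.trans →
      (∀ i, 0 ≤ (v i : ℤ) + d i) →
      Run V (q', fun i => ((v i : ℤ) + d i).toNat) w c' →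
      Run V (q, v) (a :: w) c'

/-- The initial configuration: initial state with all counters zero. -/
def initConf (V : VASS k A) : V.Conf := (V.init, fun _ => 0)

/-- Coverability acceptance: some run ends in an accepting state. -/
def LangCover (V : VASS k A) : Set (List A) :=
  {w | ∃ c, V.Run V.initConf w c ∧ c.1 ∈ V.acc}

/-- Reachability acceptance: some run ends in an accepting state with all counters zero. -/
def LangReach (V : VASS k A) : Set (List A) :=
  {w | ∃ c, V.Run V.initConf w c ∧ c.1 ∈ V.acc ∧ c.2 = fun _ => 0}

/-- Deterministic: at most one outgoing transition per state and letter. -/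
def Det (V : VASS k A) : Prop :=
  ∀ q a d₁ q₁ d₂ q₂, (q, a, d₁, q₁) ∈ V.trans → (q, a, d₂, q₂) ∈ V.trans →
    d₁ = d₂ ∧ q₁ = q₂

/-- A resolver: given the history (the word read so far) and the next letter,
choose the effect and target state of the transition to take. -/
def Resolver (V : VASS k A) := List A → A → (Fin k → ℤ) × Fin V.n

/-- One step of the run built by a resolver (carrying the prefix read so far). -/
noncomputable def resStep (V : VASS k A) (r : V.Resolver) :
    (List A × Option V.Conf) → A → (List A × Option V.Conf) :=
  fun p a =>
    (p.1 ++ [a],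
      p.2.bind fun c =>
        let t := r p.1 a
        if (c.1, a, t.1, t.2) ∈ V.trans ∧ ∀ i, 0 ≤ ((c.2 i : ℤ) + t.1 i) then
          some (t.2, fun i => ((c.2 i : ℤ) + t.1 i).toNat)
        else none)

/-- The configuration reached by following the resolver on `w` (if the run survives). -/
noncomputable def resRun (V : VASS k A) (r : V.Resolver) (w : List A) : Option V.Conf :=
  (w.foldl (V.resStep r) ([], some V.initConf)).2

/-- History-determinism for coverability acceptance:
some resolver's run accepts every word of the language. -/
def HDCover (V : VASS k A) : Prop :=
  ∃ r : V.Resolver, ∀ w ∈ V.LangCover,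
    ∃ c, V.resRun r w = some c ∧ c.1 ∈ V.acc

/-- History-determinism for reachability acceptance. -/
def HDReach (V : VASS k A) : Prop :=
  ∃ r : V.Resolver, ∀ w ∈ V.LangReach,
    ∃ c, V.resRun r w = some c ∧ c.1 ∈ V.acc ∧ c.2 = fun _ => 0

/-- Coverability language of a VASS with ε-transitions (letter `none` is silent):
the input word is the sequence of actual letters read. -/
def LangCoverE (V : VASS k (Option A)) : Set (List A) :=
  {w | ∃ u c, V.Run V.initConf u c ∧ u.reduceOption = w ∧ c.1 ∈ V.acc}

/-- Reachability language of a VASS with ε-transitions. -/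
def LangReachE (V : VASS k (Option A)) : Set (List A) :=
  {w | ∃ u c, V.Run V.initConf u c ∧ u.reduceOption = w ∧ c.1 ∈ V.acc ∧ c.2 = fun _ => 0}

/-- History-determinism with ε-transitions, coverability: a resolver together with a
(prefix-monotone) scheduling of silent moves accepts every word of the language. -/
def HDCoverE (V : VASS k (Option A)) : Prop :=
  ∃ (r : V.Resolver) (f : List A → List (Option A)),
    (∀ u w, u <+: w → f u <+: f w) ∧
    ∀ w ∈ V.LangCoverE, (f w).reduceOption = w ∧
      ∃ c, V.resRun r (f w) = some c ∧ c.1 ∈ V.acc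

/-- History-determinism with ε-transitions, reachability. -/
def HDReachE (V : VASS k (Option A)) : Prop :=
  ∃ (r : V.Resolver) (f : List A → List (Option A)),
    (∀ u w, u <+: w → f u <+: f w) ∧
    ∀ w ∈ V.LangReachE, (f w).reduceOption = w ∧
      ∃ c, V.resRun r (f w) = some c ∧ c.1 ∈ V.acc ∧ c.2 = fun _ => 0

end VASS

inductive ABC | a | b | c
deriving DecidableEq

/-- Languages of deterministic `k`-VASS under coverability acceptance. -/
def DetC (k : ℕ) : Set (Set (List ABC)) :=
  {L | ∃ V : VASS k ABC, V.Det ∧ V.LangCover = L}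

/-- Languages of history-deterministic `k`-VASS under coverability acceptance. -/
def HDC (k : ℕ) : Set (Set (List ABC)) :=
  {L | ∃ V : VASS k ABC, V.HDCover ∧ V.LangCover = L}

/-- Languages of nondeterministic `k`-VASS under coverability acceptance. -/
def NC (k : ℕ) : Set (Set (List ABC)) :=
  {L | ∃ V : VASS k ABC, V.LangCover = L}

/- ===================== Auxiliary development ===================== -/

namespace VASSAux

open VASS

variable {k : ℕ} {A : Type}

/-- Composing runs along appended words. -/
lemma run_append {V : VASS k A} :
    ∀ {c c' c'' : V.Conf} {u v : List A},
      V.Run c u c' → V.Run c' v c'' → V.Run c (u ++ v) c'' := by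
  intro c c' c'' u v h1 h2
  induction h1 with
  | nil c => simpa using h2
  | cons mem nonneg rest ih => exact Run.cons mem nonneg (ih h2)

/-- Splitting a run along appended words. -/
lemma run_split {V : VASS k A} :
    ∀ (u : List A) {v : List A} {c c'' : V.Conf},
      V.Run c (u ++ v) c'' → ∃ c', V.Run c u c' ∧ V.Run c' v c'' := by
  intro u
  induction u with
  | nil => intro v c c'' h; exact ⟨c, Run.nil c, by simpa using h⟩
  | cons x u ih =>
    intro v c c'' h
    cases h with
    | cons mem nonneg rest =>
      obtain ⟨c', h1, h2⟩ := ih rest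
      exact ⟨c', Run.cons mem nonneg h1, h2⟩

/-- Runs can be shifted up by any constant counter vector. -/
lemma run_shift {V : VASS k A} (d : Fin k → ℕ) :
    ∀ {c c' : V.Conf} {w : List A}, V.Run c w c' →
      V.Run (c.1, fun i => c.2 i + d i) w (c'.1, fun i => c'.2 i + d i) := by
  intro c c' w h
  induction h with
  | nil c => exact Run.nil _
  | @cons q v a e q' w' c' mem nonneg rest ih =>
    refine Run.cons (v := fun i => v i + d i) mem (fun i => ?_) ?_
    · have := nonneg i; push_cast; push_cast at this; omega
    · have hfe : (fun i => (((v i + d i : ℕ) : ℤ) + e i).toNat)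
          = fun i => ((v i : ℤ) + e i).toNat + d i := by
        funext i
        have := nonneg i
        push_cast
        omega
      rw [hfe]
      exact ih

/-- Uniqueness of runs in a deterministic VASS. -/
lemma run_unique {V : VASS k A} (hdet : V.Det) :
    ∀ (w : List A) {c c₁ c₂ : V.Conf},
      V.Run c w c₁ → V.Run c w c₂ → c₁ = c₂ := by
  intro w
  induction w with
  | nil =>
    intro c c₁ c₂ h1 h2
    cases h1; cases h2; rfl
  | cons x w ih =>
    intro c c₁ c₂ h1 h2
    cases h1 with
    | cons mem1 nonneg1 rest1 =>
      cases h2 with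
      | cons mem2 nonneg2 rest2 =>
        obtain ⟨hd, hq⟩ := hdet _ _ _ _ _ _ mem1 mem2
        subst hd; subst hq
        exact ih rest1 rest2

/- ====== resolver run lemmas ====== -/

lemma resStep_none {V : VASS k A} (r : V.Resolver) (h : List A) (x : A) :
    V.resStep r (h, none) x = (h ++ [x], none) := by
  simp [VASS.resStep]

lemma foldl_resStep_fst {V : VASS k A} (r : V.Resolver) :
    ∀ (s : List A) (p : List A × Option V.Conf),
      (s.foldl (V.resStep r) p).1 = p.1 ++ s := by
  intro s
  induction s with
  | nil => intro p; simp
  | cons x s ih =>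
    intro p
    have : V.resStep r p x = (p.1 ++ [x], (V.resStep r p x).2) := rfl
    simp only [List.foldl_cons]
    rw [this, ih]
    simp

lemma foldl_resStep_none {V : VASS k A} (r : V.Resolver) :
    ∀ (s : List A) (h : List A), (s.foldl (V.resStep r) (h, none)).2 = none := by
  intro s
  induction s with
  | nil => intro h; rfl
  | cons x s ih =>
    intro h
    simp only [List.foldl_cons, resStep_none]
    exact ih _

lemma foldl_resStep_run {V : VASS k A} (r : V.Resolver) :
    ∀ (s : List A) (h : List A) (c c' : V.Conf),
      (s.foldl (V.resStep r) (h, some c)).2 = some c' → V.Run c s c' := by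
  intro s
  induction s with
  | nil =>
    intro h c c' hc
    simp only [List.foldl_nil] at hc
    cases hc
    exact Run.nil c
  | cons x s ih =>
    intro h c c' hc
    by_cases hcond : (c.1, x, (r h x).1, (r h x).2) ∈ V.trans ∧
        ∀ i, 0 ≤ ((c.2 i : ℤ) + (r h x).1 i)
    · have hstep : V.resStep r (h, some c) x
          = (h ++ [x], some ((r h x).2, fun i => ((c.2 i : ℤ) + (r h x).1 i).toNat)) := by
        simp [VASS.resStep, hcond]
      simp only [List.foldl_cons] at hc
      rw [hstep] at hc
      have := ih _ _ _ hc
      exact Run.cons (q := c.1) (v := c.2) hcond.1 hcond.2 this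
    · have hstep : V.resStep r (h, some c) x = (h ++ [x], none) := by
        simp [VASS.resStep, hcond]
      simp only [List.foldl_cons] at hc
      rw [hstep] at hc
      rw [foldl_resStep_none] at hc
      cases hc

lemma foldl_resRun {V : VASS k A} (r : V.Resolver) (w : List A) :
    w.foldl (V.resStep r) ([], some V.initConf) = (w, V.resRun r w) := by
  have h1 := foldl_resStep_fst r w ([], some V.initConf)
  have : w.foldl (V.resStep r) ([], some V.initConf)
      = ((w.foldl (V.resStep r) ([], some V.initConf)).1,
         (w.foldl (V.resStep r) ([], some V.initConf)).2) := rfl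
  rw [this, h1]
  simp [VASS.resRun]

lemma res_run_of_some {V : VASS k A} {r : V.Resolver} {w : List A} {c : V.Conf}
    (hw : V.resRun r w = some c) : V.Run V.initConf w c := by
  apply foldl_resStep_run r w [] V.initConf c
  rw [foldl_resRun, hw]

lemma res_run_seg {V : VASS k A} {r : V.Resolver} {w s : List A} {c c' : V.Conf}
    (hw : V.resRun r w = some c) (hws : V.resRun r (w ++ s) = some c') :
    V.Run c s c' := by
  apply foldl_resStep_run r s w c c'
  have : V.resRun r (w ++ s) = (s.foldl (V.resStep r) (w, some c)).2 := by
    rw [VASS.resRun, List.foldl_append, foldl_resRun, hw]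
  rw [← this, hws]

end VASSAux
/- ====== deterministic VASS are history-deterministic ====== -/

namespace VASSAux

open VASS

variable {k : ℕ} {A : Type}

noncomputable def pick (V : VASS k A) (q : Fin V.n) (x : A) : (Fin k → ℤ) × Fin V.n :=
  if h : ∃ p : (Fin k → ℤ) × Fin V.n, (q, x, p.1, p.2) ∈ V.trans then h.choose else (0, q)

noncomputable def stA (V : VASS k A) (h : List A) : Fin V.n :=
  h.foldl (fun q x => (pick V q x).2) V.init

noncomputable def detRes (V : VASS k A) : V.Resolver := fun h x => pick V (stA V h) x

lemma stA_append (V : VASS k A) (h : List A) (x : A) :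
    stA V (h ++ [x]) = (pick V (stA V h) x).2 := by
  simp [VASSAux.stA, List.foldl_append]

lemma det_sim {V : VASS k A} (hdet : V.Det) :
    ∀ {w : List A} {c₀ cfin : V.Conf}, V.Run c₀ w cfin →
      ∀ h : List A, stA V h = c₀.1 →
        w.foldl (V.resStep (detRes V)) (h, some c₀) = (h ++ w, some cfin) := by
  intro w c₀ cfin hrun
  induction hrun with
  | nil c => intro h _; simp
  | @cons q v x d q' w' c' mem nonneg rest ih =>
    intro h hst
    have hex : ∃ p : (Fin k → ℤ) × Fin V.n, (q, x, p.1, p.2) ∈ V.trans := ⟨(d, q'), mem⟩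
    have hpick : pick V q x = hex.choose := by
      rw [VASSAux.pick, dif_pos hex]
    have hspec : (q, x, (pick V q x).1, (pick V q x).2) ∈ V.trans := by
      rw [hpick]; exact hex.choose_spec
    obtain ⟨hd, hq⟩ := hdet _ _ _ _ _ _ hspec mem
    have hres : (detRes V) h x = (d, q') := by
      rw [VASSAux.detRes, hst]
      dsimp only
      rw [← hd, ← hq]
    have hstep : V.resStep (detRes V) (h, some (q, v)) x
        = (h ++ [x], some (q', fun i => ((v i : ℤ) + d i).toNat)) := by
      simp only [VASS.resStep, hres, Option.bind_some]
      rw [if_pos (show (q, x, d, q') ∈ V.trans ∧ ∀ i, 0 ≤ ((v i : ℤ) + d i) from ⟨mem, nonneg⟩)]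
    have hst' : stA V (h ++ [x]) = q' := by
      rw [stA_append, hst]; dsimp only; rw [hq]
    simp only [List.foldl_cons, hstep]
    rw [ih (h ++ [x]) hst']
    simp

lemma det_HDCover {V : VASS k A} (hdet : V.Det) : V.HDCover := by
  refine ⟨detRes V, ?_⟩
  rintro w ⟨c, hrun, hacc⟩
  refine ⟨c, ?_, hacc⟩
  have := det_sim hdet hrun [] rfl
  rw [VASS.resRun, this]

/- ====== extraction machinery ====== -/

lemma infinite_exists_gt {s : Set ℕ} (hs : s.Infinite) (a : ℕ) : ∃ b, b ∈ s ∧ a < b := by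
  by_contra hcon
  push_neg at hcon
  exact hs ((Set.finite_Iic a).subset fun b hb => hcon b hb)

noncomputable def seqOf (s : Set ℕ) (hs : s.Infinite) : ℕ → ℕ
  | 0 => (infinite_exists_gt hs 0).choose
  | n + 1 => (infinite_exists_gt hs (seqOf s hs n)).choose

lemma seqOf_mem (s : Set ℕ) (hs : s.Infinite) : ∀ n, seqOf s hs n ∈ s := by
  intro n
  cases n with
  | zero => exact (infinite_exists_gt hs 0).choose_spec.1
  | succ n => exact (infinite_exists_gt hs (seqOf s hs n)).choose_spec.1

lemma seqOf_strictMono (s : Set ℕ) (hs : s.Infinite) : StrictMono (seqOf s hs) := by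
  apply strictMono_nat_of_lt_succ
  intro n
  exact (infinite_exists_gt hs (seqOf s hs n)).choose_spec.2

/-- Any sequence into a finite type has a subsequence with constant value. -/
lemma const_subseq {β : Type*} [Finite β] (f : ℕ → β) :
    ∃ φ : ℕ → ℕ, StrictMono φ ∧ ∀ m n, f (φ m) = f (φ n) := by
  obtain ⟨y, hy⟩ := Finite.exists_infinite_fiber f
  have hs : {n : ℕ | f n = y}.Infinite := by
    have : (f ⁻¹' {y}).Infinite := Set.infinite_coe_iff.mp hy
    simpa [Set.preimage, Set.mem_singleton_iff] using this
  refine ⟨seqOf _ hs, seqOf_strictMono _ hs, fun m n => ?_⟩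
  have hm := seqOf_mem _ hs m
  have hn := seqOf_mem _ hs n
  simp only [Set.mem_setOf_eq] at hm hn
  rw [hm, hn]

noncomputable def seq2 (g : ℕ → ℕ) (key : ∀ a B : ℕ, ∃ m, a < m ∧ B < g m) : ℕ → ℕ
  | 0 => 0
  | n + 1 => (key (seq2 g key n) (g (seq2 g key n))).choose

/-- Any sequence of naturals has a subsequence which is constant or strictly monotone. -/
lemma const_or_strict_subseq (g : ℕ → ℕ) :
    ∃ φ : ℕ → ℕ, StrictMono φ ∧
      ((∀ m n, g (φ m) = g (φ n)) ∨ StrictMono (g ∘ φ)) := by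
  by_cases hf : ∃ v, {n : ℕ | g n = v}.Infinite
  · obtain ⟨v, hv⟩ := hf
    refine ⟨seqOf _ hv, seqOf_strictMono _ hv, Or.inl fun m n => ?_⟩
    have hm := seqOf_mem _ hv m
    have hn := seqOf_mem _ hv n
    simp only [Set.mem_setOf_eq] at hm hn
    rw [hm, hn]
  · push_neg at hf
    have hfin : ∀ v, {n : ℕ | g n = v}.Finite := by
      intro v
      exact hf v
    have key : ∀ a B : ℕ, ∃ m, a < m ∧ B < g m := by
      intro a B
      have hsub : {n : ℕ | g n ≤ B} ⊆ ⋃ v ∈ Finset.range (B + 1), {n : ℕ | g n = v} := by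
        intro n hn
        simp only [Set.mem_setOf_eq] at hn
        simp only [Set.mem_iUnion]
        exact ⟨g n, by simpa using Nat.lt_succ_of_le hn, rfl⟩
      have hfin2 : {n : ℕ | g n ≤ B}.Finite :=
        Set.Finite.subset (Set.Finite.biUnion (Finset.range (B + 1)).finite_toSet
          (fun v _ => hfin v)) hsub
      have hinf : {n : ℕ | B < g n}.Infinite := by
        have : {n : ℕ | g n ≤ B}ᶜ = {n : ℕ | B < g n} := by
          ext n; simp [not_le]
        rw [← this]
        exact Set.Finite.infinite_compl hfin2
      obtain ⟨m, hm, ham⟩ := infinite_exists_gt hinf a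
      exact ⟨m, ham, hm⟩
    refine ⟨seq2 g key, ?_, Or.inr ?_⟩
    · apply strictMono_nat_of_lt_succ
      intro n
      exact (key (seq2 g key n) (g (seq2 g key n))).choose_spec.1
    · apply strictMono_nat_of_lt_succ
      intro n
      exact (key (seq2 g key n) (g (seq2 g key n))).choose_spec.2

/-- Refine over a list of coordinates. -/
lemma refine_list (L : List (Fin k)) (F : ℕ → Fin k → ℕ) :
    ∃ φ : ℕ → ℕ, StrictMono φ ∧ ∀ x ∈ L,
      ((∀ m n, F (φ m) x = F (φ n) x) ∨ StrictMono fun i => F (φ i) x) := by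
  induction L with
  | nil => exact ⟨id, strictMono_id, by simp⟩
  | cons x L ih =>
    obtain ⟨φ₁, hφ₁, hL⟩ := ih
    obtain ⟨φ₂, hφ₂, hx⟩ := const_or_strict_subseq (fun i => F (φ₁ i) x)
    refine ⟨φ₁ ∘ φ₂, hφ₁.comp hφ₂, ?_⟩
    intro y hy
    rcases List.mem_cons.mp hy with hy | hy
    · subst hy
      rcases hx with hx | hx
      · exact Or.inl hx
      · exact Or.inr hx
    · rcases hL y hy with h | h
      · exact Or.inl fun m n => h (φ₂ m) (φ₂ n)
      · exact Or.inr (h.comp hφ₂)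

/-- Main extraction lemma. -/
lemma extract {N : ℕ} (f : ℕ → Fin N × (Fin k → ℕ)) :
    ∃ i j l : ℕ, i < j ∧ j < l ∧ (f i).1 = (f j).1 ∧ (f i).1 = (f l).1 ∧
      (∀ x, (f i).2 x ≤ (f j).2 x) ∧
      (∀ x, (f i).2 x = (f j).2 x → (f l).2 x = (f i).2 x) := by
  obtain ⟨φ₀, hφ₀, hconst⟩ := const_subseq (fun n => (f n).1)
  obtain ⟨φ₁, hφ₁, hco⟩ := refine_list (List.finRange k) (fun n x => (f (φ₀ n)).2 x)
  set ψ : ℕ → ℕ := φ₀ ∘ φ₁ with hψ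
  have hψm : StrictMono ψ := hφ₀.comp hφ₁
  refine ⟨ψ 0, ψ 1, ψ 2, hψm (by norm_num), hψm (by norm_num),
    hconst (φ₁ 0) (φ₁ 1), hconst (φ₁ 0) (φ₁ 2), ?_, ?_⟩
  · intro x
    rcases hco x (List.mem_finRange x) with h | h
    · exact le_of_eq (h 0 1)
    · exact le_of_lt (h (by norm_num : (0:ℕ) < 1))
  · intro x heq
    rcases hco x (List.mem_finRange x) with h | h
    · exact h 2 0
    · exfalso
      have := h (by norm_num : (0:ℕ) < 1)
      exact absurd heq (ne_of_lt this)

end VASSAux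
/- ====== ABC-specific list machinery ====== -/

namespace VASSAux

open VASS List

/-- Membership-free abbreviation: no `c` occurs. -/
def CFree (w : List ABC) : Prop := ABC.c ∉ w

/-- Length of the maximal `a`-suffix. -/
def lastA (w : List ABC) : ℕ := (w.reverse.takeWhile (fun x => x = ABC.a)).length

lemma takeWhile_rep_stop (j : ℕ) (t : List ABC) :
    List.takeWhile (fun x => decide (x = ABC.a)) (List.replicate j ABC.a ++ ABC.b :: t)
      = List.replicate j ABC.a := by
  induction j with
  | zero => simp [List.takeWhile]
  | succ j ih => simpa [List.replicate_succ, List.takeWhile_cons] using ih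

lemma takeWhile_rep_pass (j : ℕ) (t : List ABC) :
    List.takeWhile (fun x => decide (x = ABC.a)) (List.replicate j ABC.a ++ t)
      = List.replicate j ABC.a ++ List.takeWhile (fun x => decide (x = ABC.a)) t := by
  induction j with
  | zero => simp
  | succ j ih => simpa [List.replicate_succ, List.takeWhile_cons] using ih

lemma lastA_append_b_rep (x : List ABC) (j : ℕ) :
    lastA (x ++ (ABC.b :: List.replicate j ABC.a)) = j := by
  unfold lastA
  rw [List.reverse_append]
  have : (ABC.b :: List.replicate j ABC.a).reverse
      = List.replicate j ABC.a ++ [ABC.b] := by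
    simp [List.reverse_cons, List.reverse_replicate]
  rw [this, List.append_assoc]
  rw [show ([ABC.b] ++ x.reverse) = ABC.b :: x.reverse by simp]
  rw [takeWhile_rep_stop]
  simp

lemma lastA_append_rep (x : List ABC) (j : ℕ) :
    lastA (x ++ List.replicate j ABC.a) = lastA x + j := by
  unfold lastA
  rw [List.reverse_append, List.reverse_replicate, takeWhile_rep_pass]
  simp [Nat.add_comm]

lemma lastA_rep (j : ℕ) : lastA (List.replicate j ABC.a) = j := by
  have := lastA_append_rep [] j
  simpa [lastA] using this

lemma takeWhile_all_eq {p : ABC → Bool} :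
    ∀ (l : List ABC), ∀ x ∈ l.takeWhile p, p x = true := by
  intro l
  induction l with
  | nil => simp
  | cons y l ih =>
    intro x hx
    rw [List.takeWhile_cons] at hx
    by_cases hp : p y
    · rw [if_pos hp] at hx
      rcases List.mem_cons.mp hx with h | h
      · subst h; exact hp
      · exact ih x h
    · rw [if_neg hp] at hx
      simp at hx

/-- Decomposition along maximal `a`-suffix. -/
lemma lastA_decomp (α : List ABC) :
    ∃ β : List ABC, α = β ++ List.replicate (lastA α) ABC.a := by
  refine ⟨(α.reverse.dropWhile (fun x => x = ABC.a)).reverse, ?_⟩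
  have h1 : α.reverse.takeWhile (fun x => decide (x = ABC.a)) ++
      α.reverse.dropWhile (fun x => decide (x = ABC.a)) = α.reverse :=
    List.takeWhile_append_dropWhile
  have h2 : α.reverse.takeWhile (fun x => decide (x = ABC.a))
      = List.replicate (lastA α) ABC.a := by
    apply List.eq_replicate_iff.mpr
    constructor
    · rfl
    · intro b hb
      have := takeWhile_all_eq (p := fun x => decide (x = ABC.a)) α.reverse b hb
      simpa using this
  have := congrArg List.reverse h1
  rw [List.reverse_append, h2, List.reverse_replicate, List.reverse_reverse] at this
  exact this.symm

/- ====== The ladder word and its segments ====== -/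

/-- `T r = b a b a a b a a a ...` with `r` blocks: ends with `a^r`. -/
def T : ℕ → List ABC
  | 0 => []
  | r + 1 => T r ++ (ABC.b :: List.replicate (r + 1) ABC.a)

def seg (i : ℕ) : ℕ → List ABC
  | 0 => []
  | r + 1 => if r + 1 ≤ i then [] else seg i r ++ (ABC.b :: List.replicate (r + 1) ABC.a)

lemma T_seg (i : ℕ) : ∀ r, i ≤ r → T i ++ seg i r = T r := by
  intro r
  induction r with
  | zero => intro h; interval_cases i; simp [T, seg]
  | succ r ih =>
    intro h
    rcases Nat.lt_or_ge r (i) with hlt | hge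
    · -- i = r+1
      have : i = r + 1 := by omega
      subst this
      simp [seg]
    · have hni : ¬ (r + 1 ≤ i) := by omega
      show T i ++ seg i (r+1) = T (r+1)
      rw [seg, if_neg hni, T, ← List.append_assoc, ih hge]

lemma cfree_rep_a (j : ℕ) : CFree (List.replicate j ABC.a) := by
  intro h
  have := List.eq_of_mem_replicate h
  cases this

lemma cfree_append {u v : List ABC} (hu : CFree u) (hv : CFree v) : CFree (u ++ v) := by
  intro h
  rcases List.mem_append.mp h with h | h
  · exact hu h
  · exact hv h

lemma cfree_T (r : ℕ) : CFree (T r) := by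
  induction r with
  | zero => intro h; cases h
  | succ r ih =>
    apply cfree_append ih
    intro h
    rcases List.mem_cons.mp h with h | h
    · cases h
    · exact cfree_rep_a _ h

lemma cfree_seg (i r : ℕ) : CFree (seg i r) := by
  induction r with
  | zero => intro h; cases h
  | succ r ih =>
    rw [seg]
    split
    · intro h; cases h
    · apply cfree_append ih
      intro h
      rcases List.mem_cons.mp h with h | h
      · cases h
      · exact cfree_rep_a _ h

/-- `n`-fold repetition of a word. -/
def joinrep (σ : List ABC) : ℕ → List ABC
  | 0 => []
  | n + 1 => joinrep σ n ++ σ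

lemma cfree_joinrep {σ : List ABC} (hσ : CFree σ) (n : ℕ) : CFree (joinrep σ n) := by
  induction n with
  | zero => intro h; cases h
  | succ n ih => exact cfree_append ih hσ

/- ====== The two languages ====== -/

/-- `L1 = { a^n b^m : m ≤ n } ∪ { a^n b^m c }`. -/
def L1 : Set (List ABC) :=
  {u | (∃ n m : ℕ, u = List.replicate n ABC.a ++ List.replicate m ABC.b ∧ m ≤ n) ∨
       (∃ n m : ℕ, u = List.replicate n ABC.a ++ List.replicate m ABC.b ++ [ABC.c])}

/-- `Lb = { w c^m : w ∈ {a,b}^*, m ≤ lastA w }`. -/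
def Lb : Set (List ABC) :=
  {u | ∃ (w : List ABC) (m : ℕ),
        u = w ++ List.replicate m ABC.c ∧ CFree w ∧ m ≤ lastA w}

lemma mem_Lb_of_cfree {w : List ABC} (hw : CFree w) : w ∈ Lb :=
  ⟨w, 0, by simp, hw, by simp⟩

lemma count_cfree {w : List ABC} (hw : CFree w) : w.count ABC.c = 0 :=
  List.count_eq_zero.mpr hw

lemma Lb_bound {W : List ABC} {M : ℕ} (hW : CFree W)
    (h : W ++ List.replicate M ABC.c ∈ Lb) : M ≤ lastA W := by
  obtain ⟨w', m', heq, hw', hm'⟩ := h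
  have hcount : M = m' := by
    have := congrArg (List.count ABC.c) heq
    simpa [List.count_append, count_cfree hW, count_cfree hw',
      List.count_replicate] using this
  subst hcount
  have hWw : W = w' := by
    apply List.append_inj_left' heq
    rfl
  rw [hWw]
  exact hm'

end VASSAux
/- ====== Lb is not history-deterministic (for any k) ====== -/

namespace VASSAux

open VASS

variable {k : ℕ}

lemma lastA_T : ∀ r, lastA (T r) = r
  | 0 => by simp [T, lastA]
  | r + 1 => by rw [T]; exact lastA_append_b_rep _ _

lemma T_mem_Lb (r : ℕ) : T r ∈ Lb := mem_Lb_of_cfree (cfree_T r)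

lemma Tc_mem_Lb (r : ℕ) : T r ++ List.replicate r ABC.c ∈ Lb :=
  ⟨T r, r, rfl, cfree_T r, by rw [lastA_T]⟩

theorem Lb_not_HD (V : VASS k ABC) (hL : V.LangCover = Lb) (hHD : V.HDCover) : False := by
  obtain ⟨r, hr⟩ := hHD
  -- resolver configurations after the ladder prefixes
  have hT : ∀ n, ∃ c, V.resRun r (T n) = some c ∧ c.1 ∈ V.acc := by
    intro n
    exact hr (T n) (by rw [hL]; exact T_mem_Lb n)
  set C : ℕ → V.Conf := fun n => (hT n).choose with hC
  have hCspec : ∀ n, V.resRun r (T n) = some (C n) := fun n => (hT n).choose_spec.1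
  -- extraction
  obtain ⟨i, j, l, hij, hjl, hs1, hs2, hmono, hzero⟩ := extract C
  -- the pumping segment
  set σ : List ABC := seg i j with hσ
  have hTj : T j = T i ++ σ := (T_seg i j (le_of_lt hij)).symm
  have hseg : V.Run (C i) σ (C j) := by
    apply res_run_seg (hCspec i)
    rw [← hTj]; exact hCspec j
  set δ : Fin k → ℕ := fun x => (C j).2 x - (C i).2 x with hδ
  have hδ' : ∀ x, (C j).2 x = (C i).2 x + δ x := by
    intro x; have := hmono x; simp only [hδ]; omega
  -- pumping
  have PUMP : ∀ t, V.Run V.initConf (T i ++ joinrep σ t)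
      ((C i).1, fun x => (C i).2 x + t * δ x) := by
    intro t
    induction t with
    | zero =>
      have h0 : ((C i).1, fun x => (C i).2 x + 0 * δ x) = C i := by
        ext <;> simp
      rw [h0]
      simpa [joinrep] using res_run_of_some (hCspec i)
    | succ t ih =>
      have hshift := run_shift (V := V) (fun x => t * δ x) hseg
      have hend : (((C j).1 : Fin V.n), fun x => (C j).2 x + t * δ x)
          = ((C i).1, fun x => (C i).2 x + (t + 1) * δ x) := by
        refine Prod.ext ?_ ?_
        · exact (hs1).symm
        · funext x
          show (C j).2 x + t * δ x = (C i).2 x + (t + 1) * δ x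
          rw [hδ' x]; ring
      rw [hend] at hshift
      have : T i ++ joinrep σ (t + 1) = (T i ++ joinrep σ t) ++ σ := by
        rw [joinrep, List.append_assoc]
      rw [this]
      exact run_append ih hshift
  -- choose the pumping amount
  set Np : ℕ := (Finset.univ.sup fun x : Fin k => (C l).2 x) + 1 with hNp
  have hNple : ∀ x, (C l).2 x ≤ Np := by
    intro x
    have : (C l).2 x ≤ Finset.univ.sup fun x : Fin k => (C l).2 x :=
      Finset.le_sup (Finset.mem_univ x)
    omega
  have hle : ∀ x, (C l).2 x ≤ (C i).2 x + Np * δ x := by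
    intro x
    by_cases hx : (C i).2 x = (C j).2 x
    · have := hzero x hx
      omega
    · have h1 : (C i).2 x < (C j).2 x := lt_of_le_of_ne (hmono x) hx
      have h2 : 1 ≤ δ x := by simp only [hδ]; omega
      have := hNple x
      calc (C l).2 x ≤ Np := this
        _ ≤ Np * δ x := Nat.le_mul_of_pos_right Np h2
        _ ≤ (C i).2 x + Np * δ x := Nat.le_add_left _ _
  -- the c-descent from C l
  have hdes : ∃ F, V.Run (C l) (List.replicate l ABC.c) F ∧ F.1 ∈ V.acc := by
    obtain ⟨F, hF1, hF2⟩ := hr (T l ++ List.replicate l ABC.c)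
      (by rw [hL]; exact Tc_mem_Lb l)
    exact ⟨F, res_run_seg (hCspec l) hF1, hF2⟩
  obtain ⟨F, hFrun, hFacc⟩ := hdes
  -- shift the descent up to the pumped configuration
  set D : Fin k → ℕ := fun x => ((C i).2 x + Np * δ x) - (C l).2 x with hD
  have hshift2 := run_shift (V := V) D hFrun
  have hstart : (((C l).1 : Fin V.n), fun x => (C l).2 x + D x)
      = ((C i).1, fun x => (C i).2 x + Np * δ x) := by
    refine Prod.ext ?_ ?_
    · exact hs2.symm
    · funext x; simp only [hD]; have := hle x; omega
  rw [hstart] at hshift2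
  -- the full bad run
  have hbad : V.Run V.initConf ((T i ++ joinrep σ Np) ++ List.replicate l ABC.c)
      (F.1, fun x => F.2 x + D x) :=
    run_append (PUMP Np) hshift2
  have hmem : (T i ++ joinrep σ Np) ++ List.replicate l ABC.c ∈ Lb := by
    rw [← hL]
    exact ⟨_, hbad, hFacc⟩
  -- but the last `a`-block of the pumped word has length `j < l`
  have hcfree : CFree (T i ++ joinrep σ Np) :=
    cfree_append (cfree_T i) (cfree_joinrep (cfree_seg i j) Np)
  have hlastA : lastA (T i ++ joinrep σ Np) = j := by
    obtain ⟨jp, hjp⟩ : ∃ jp, j = jp + 1 := ⟨j - 1, by omega⟩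
    have hni : ¬ (jp + 1 ≤ i) := by omega
    have hσeq : σ = seg i jp ++ (ABC.b :: List.replicate (jp + 1) ABC.a) := by
      rw [hσ, hjp, seg, if_neg hni]
    obtain ⟨t, ht⟩ : ∃ t, Np = t + 1 := ⟨Np - 1, by omega⟩
    rw [ht]
    have hj1 : joinrep σ (t + 1) = joinrep σ t ++
        (seg i jp ++ (ABC.b :: List.replicate (jp + 1) ABC.a)) := by
      rw [joinrep, ← hσeq]
    have : T i ++ joinrep σ (t + 1) = ((T i ++ joinrep σ t) ++ seg i jp)
        ++ (ABC.b :: List.replicate (jp + 1) ABC.a) := by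
      rw [hj1]; simp [List.append_assoc]
    rw [this, lastA_append_b_rep, hjp]
  have := Lb_bound hcfree hmem
  rw [hlastA] at this
  omega

end VASSAux
/- ====== The witness machine V2 : LangCover = Lb ====== -/

namespace VASSAux

open VASS

variable {k : ℕ}

def e1 : Fin k → ℤ := fun i => if (i : ℕ) = 0 then 1 else 0

def vN (j : ℕ) : Fin k → ℕ := fun i => if (i : ℕ) = 0 then j else 0

lemma upd_zero (v : Fin k → ℕ) :
    (fun i => ((v i : ℤ) + (0 : Fin k → ℤ) i).toNat) = v := by
  funext i; simp

lemma nonneg_zero (v : Fin k → ℕ) : ∀ i, (0:ℤ) ≤ (v i : ℤ) + (0 : Fin k → ℤ) i := by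
  intro i; simp

lemma upd_plus (j : ℕ) :
    (fun i => ((vN j i : ℤ) + (e1 : Fin k → ℤ) i).toNat) = vN (j + 1) := by
  funext i
  by_cases h : (i : ℕ) = 0 <;> simp [vN, e1, h]

lemma nonneg_plus (j : ℕ) : ∀ i : Fin k, (0:ℤ) ≤ (vN j i : ℤ) + e1 i := by
  intro i
  by_cases h : (i : ℕ) = 0 <;> simp [vN, e1, h] <;> omega

lemma upd_minus {j : ℕ} (hj : 1 ≤ j) :
    (fun i => ((vN j i : ℤ) + (-(e1 : Fin k → ℤ)) i).toNat) = vN (j - 1) := by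
  funext i
  by_cases h : (i : ℕ) = 0 <;> simp [vN, e1, h] <;> omega

lemma nonneg_minus {j : ℕ} (hj : 1 ≤ j) :
    ∀ i : Fin k, (0:ℤ) ≤ (vN j i : ℤ) + (-(e1 : Fin k → ℤ)) i := by
  intro i
  by_cases h : (i : ℕ) = 0 <;> simp [vN, e1, h] <;> omega

lemma init_vN (V : VASS k ABC) : (fun _ : Fin k => (0:ℕ)) = vN 0 := by
  funext i; simp [vN]

/-- The nondeterministic machine for `Lb`: guess the start of the last `a`-block. -/
@[reducible] def V2 (k : ℕ) : VASS k ABC where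
  n := 3
  trans := {t | t = (0, ABC.a, 0, 0) ∨ t = (0, ABC.b, 0, 0) ∨ t = (0, ABC.a, e1, 1) ∨
    t = (1, ABC.a, e1, 1) ∨ t = (1, ABC.c, -e1, 2) ∨ t = (2, ABC.c, -e1, 2)}
  init := 0
  acc := Set.univ

lemma runS {β : List ABC} (hβ : CFree β) :
    ∀ v : Fin k → ℕ, (V2 k).Run (0, v) β (0, v) := by
  induction β with
  | nil => intro v; exact Run.nil _
  | cons x β ih =>
    intro v
    have hx : x ≠ ABC.c := by
      intro h; subst h; exact hβ List.mem_cons_self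
    have hβ' : CFree β := fun h => hβ (List.mem_cons_of_mem _ h)
    have hnext := ih hβ' v
    cases x with
    | a =>
      refine Run.cons (d := 0) (q' := 0) (by simp [V2]) (nonneg_zero v) ?_
      rw [upd_zero]; exact hnext
    | b =>
      refine Run.cons (d := 0) (q' := 0) (by simp [V2]) (nonneg_zero v) ?_
      rw [upd_zero]; exact hnext
    | c => exact absurd rfl hx

lemma runTA : ∀ (p j : ℕ), (V2 k).Run (1, vN j) (List.replicate p ABC.a) (1, vN (j + p)) := by
  intro p
  induction p with
  | zero => intro j; simpa using Run.nil _
  | succ p ih =>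
    intro j
    rw [List.replicate_succ]
    refine Run.cons (d := e1) (q' := 1) (by simp [V2]) (nonneg_plus j) ?_
    rw [upd_plus]
    have := ih (j + 1)
    have harith : j + 1 + p = j + (p + 1) := by omega
    rwa [harith] at this

lemma runUC : ∀ (m x : ℕ), m ≤ x →
    (V2 k).Run (2, vN x) (List.replicate m ABC.c) (2, vN (x - m)) := by
  intro m
  induction m with
  | zero => intro x _; simpa using Run.nil _
  | succ m ih =>
    intro x hx
    rw [List.replicate_succ]
    have hx1 : 1 ≤ x := by omega
    refine Run.cons (d := -e1) (q' := 2) (by simp [V2]) (nonneg_minus hx1) ?_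
    rw [upd_minus hx1]
    have := ih (x - 1) (by omega)
    have harith : x - 1 - m = x - (m + 1) := by omega
    rwa [harith] at this

lemma Lb_sub_LangCover : Lb ⊆ (V2 k).LangCover := by
  rintro u ⟨α, m, rfl, hα, hm⟩
  rcases Nat.eq_zero_or_pos m with hm0 | hmpos
  · subst hm0
    refine ⟨(0, fun _ => 0), ?_, Set.mem_univ _⟩
    simpa [VASS.initConf, V2] using runS hα (fun _ => 0)
  · -- m ≥ 1, so lastA α ≥ 1
    obtain ⟨β, hβ⟩ := lastA_decomp α
    set L : ℕ := lastA α with hLdef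
    have hL1 : 1 ≤ L := le_trans hmpos hm
    have hβc : CFree β := by
      intro h
      exact hα (by rw [hβ]; exact List.mem_append.mpr (Or.inl h))
    -- runs
    have r1 : (V2 k).Run (0, vN 0) β (0, vN 0) := runS hβc _
    have r2 : (V2 k).Run (0, vN 0) [ABC.a] (1, vN 1) := by
      refine Run.cons (d := e1) (q' := 1) (by simp [V2]) (nonneg_plus 0) ?_
      rw [upd_plus]
      exact Run.nil _
    have r3 : (V2 k).Run (1, vN 1) (List.replicate (L - 1) ABC.a) (1, vN L) := by
      have := runTA (k := k) (L - 1) 1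
      have harith : 1 + (L - 1) = L := by omega
      rwa [harith] at this
    have r4 : (V2 k).Run (1, vN L) [ABC.c] (2, vN (L - 1)) := by
      refine Run.cons (d := -e1) (q' := 2) (by simp [V2]) (nonneg_minus hL1) ?_
      rw [upd_minus hL1]
      exact Run.nil _
    have r5 : (V2 k).Run (2, vN (L - 1)) (List.replicate (m - 1) ABC.c)
        (2, vN (L - 1 - (m - 1))) := runUC _ _ (by omega)
    have rall : (V2 k).Run (0, vN 0)
        (β ++ ([ABC.a] ++ (List.replicate (L-1) ABC.a ++ ([ABC.c] ++ List.replicate (m-1) ABC.c))))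
        (2, vN (L - 1 - (m - 1))) :=
      run_append r1 (run_append r2 (run_append r3 (run_append r4 r5)))
    have hlist : α ++ List.replicate m ABC.c
        = β ++ ([ABC.a] ++ (List.replicate (L-1) ABC.a ++ ([ABC.c] ++ List.replicate (m-1) ABC.c))) := by
      have e1 : [ABC.a] ++ List.replicate (L-1) ABC.a = List.replicate L ABC.a := by
        have : L = (L - 1) + 1 := by omega
        rw [this]
        simp [List.replicate_succ]
      have e2 : [ABC.c] ++ List.replicate (m-1) ABC.c = List.replicate m ABC.c := by
        have : m = (m - 1) + 1 := by omega
        rw [this]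
        simp [List.replicate_succ]
      calc α ++ List.replicate m ABC.c
          = (β ++ List.replicate L ABC.a) ++ List.replicate m ABC.c := by rw [← hβ]
        _ = β ++ ([ABC.a] ++ (List.replicate (L-1) ABC.a ++ ([ABC.c] ++ List.replicate (m-1) ABC.c))) := by
            rw [← e1, ← e2]; simp [List.append_assoc]
    refine ⟨(2, vN (L - 1 - (m - 1))), ?_, Set.mem_univ _⟩
    rw [hlist]
    have : (V2 k).initConf = ((0 : Fin 3), vN 0) := by
      simp only [VASS.initConf, V2]
      rw [init_vN (V2 k)]
    rw [this]
    exact rall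

/-- Characterization of runs of `V2`. -/
lemma CH2 (hk : 0 < k) :
    ∀ (w : List ABC) (q : Fin 3) (v : Fin k → ℕ) (cf : (V2 k).Conf),
      (V2 k).Run (q, v) w cf →
      (q = 0 → (CFree w ∨ ∃ (β : List ABC) (jm mm : ℕ),
          w = β ++ List.replicate jm ABC.a ++ List.replicate mm ABC.c ∧
          CFree β ∧ mm ≤ v ⟨0, hk⟩ + jm)) ∧
      (q = 1 → ∃ jm mm : ℕ,
          w = List.replicate jm ABC.a ++ List.replicate mm ABC.c ∧ mm ≤ v ⟨0, hk⟩ + jm) ∧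
      (q = 2 → ∃ mm : ℕ, w = List.replicate mm ABC.c ∧ mm ≤ v ⟨0, hk⟩) := by
  intro w
  induction w with
  | nil =>
    intro q v cf _
    refine ⟨fun _ => Or.inl (by intro h; cases h), fun _ => ⟨0, 0, by simp, by simp⟩,
      fun _ => ⟨0, by simp⟩⟩
  | cons x w ih =>
    intro q v cf hrun
    cases hrun with
    | @cons _ _ _ d q' _ _ mem nonneg rest =>
      have IH := ih q' (fun i => ((v i : ℤ) + d i).toNat) cf rest
      simp only [V2, Set.mem_setOf_eq, Prod.mk.injEq] at mem
      rcases mem with ⟨hq, hx, hd, hq'⟩ | ⟨hq, hx, hd, hq'⟩ | ⟨hq, hx, hd, hq'⟩ |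
        ⟨hq, hx, hd, hq'⟩ | ⟨hq, hx, hd, hq'⟩ | ⟨hq, hx, hd, hq'⟩ <;>
        subst hq <;> subst hx <;> subst hd <;> subst hq'
      -- case (0, a, 0, 0)
      · rw [show ((v ⟨0, hk⟩ : ℤ) + (0 : Fin k → ℤ) ⟨0, hk⟩).toNat = v ⟨0, hk⟩ by simp] at IH
        refine ⟨fun _ => ?_, fun h => absurd h (by decide), fun h => absurd h (by decide)⟩
        rcases (IH.1 rfl) with hcf | ⟨β, jm, mm, hw, hβ, hle⟩
        · left
          intro h
          rcases List.mem_cons.mp h with h | h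
          · cases h
          · exact hcf h
        · right
          refine ⟨ABC.a :: β, jm, mm, ?_, ?_, hle⟩
          · rw [hw]; simp
          · intro h
            rcases List.mem_cons.mp h with h | h
            · cases h
            · exact hβ h
      -- case (0, b, 0, 0)
      · rw [show ((v ⟨0, hk⟩ : ℤ) + (0 : Fin k → ℤ) ⟨0, hk⟩).toNat = v ⟨0, hk⟩ by simp] at IH
        refine ⟨fun _ => ?_, fun h => absurd h (by decide), fun h => absurd h (by decide)⟩
        rcases (IH.1 rfl) with hcf | ⟨β, jm, mm, hw, hβ, hle⟩
        · left
          intro h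
          rcases List.mem_cons.mp h with h | h
          · cases h
          · exact hcf h
        · right
          refine ⟨ABC.b :: β, jm, mm, ?_, ?_, hle⟩
          · rw [hw]; simp
          · intro h
            rcases List.mem_cons.mp h with h | h
            · cases h
            · exact hβ h
      -- case (0, a, e1, 1)
      · refine ⟨fun _ => ?_, fun h => absurd h (by decide), fun h => absurd h (by decide)⟩
        obtain ⟨jm, mm, hw, hle⟩ := IH.2.1 rfl
        right
        have hv : (fun i => ((v i : ℤ) + e1 i).toNat) ⟨0, hk⟩ = v ⟨0, hk⟩ + 1 := by
          simp [e1]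
        beta_reduce at hv; rw [hv] at hle
        refine ⟨[], jm + 1, mm, ?_, ?_, ?_⟩
        · rw [hw]; simp [List.replicate_succ]
        · intro h; cases h
        · omega
      -- case (1, a, e1, 1)
      · refine ⟨fun h => absurd h (by decide), fun _ => ?_, fun h => absurd h (by decide)⟩
        obtain ⟨jm, mm, hw, hle⟩ := IH.2.1 rfl
        have hv : (fun i => ((v i : ℤ) + e1 i).toNat) ⟨0, hk⟩ = v ⟨0, hk⟩ + 1 := by
          simp [e1]
        beta_reduce at hv; rw [hv] at hle
        refine ⟨jm + 1, mm, ?_, ?_⟩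
        · rw [hw]; simp [List.replicate_succ]
        · omega
      -- case (1, c, -e1, 2)
      · refine ⟨fun h => absurd h (by decide), fun _ => ?_, fun h => absurd h (by decide)⟩
        obtain ⟨mm, hw, hle⟩ := IH.2.2 rfl
        have hpos : 1 ≤ v ⟨0, hk⟩ := by
          have := nonneg ⟨0, hk⟩
          simp [e1] at this
          omega
        have hv : (fun i => ((v i : ℤ) + (-e1) i).toNat) ⟨0, hk⟩ = v ⟨0, hk⟩ - 1 := by
          simp [e1]
          omega
        beta_reduce at hv; rw [hv] at hle
        refine ⟨0, mm + 1, ?_, ?_⟩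
        · rw [hw]; simp [List.replicate_succ]
        · omega
      -- case (2, c, -e1, 2)
      · refine ⟨fun h => absurd h (by decide), fun h => absurd h (by decide), fun _ => ?_⟩
        obtain ⟨mm, hw, hle⟩ := IH.2.2 rfl
        have hpos : 1 ≤ v ⟨0, hk⟩ := by
          have := nonneg ⟨0, hk⟩
          simp [e1] at this
          omega
        have hv : (fun i => ((v i : ℤ) + (-e1) i).toNat) ⟨0, hk⟩ = v ⟨0, hk⟩ - 1 := by
          simp [e1]
          omega
        beta_reduce at hv; rw [hv] at hle
        refine ⟨mm + 1, ?_, ?_⟩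
        · rw [hw]; simp [List.replicate_succ]
        · omega

lemma LangCover_V2 (hk : 0 < k) : (V2 k).LangCover = Lb := by
  apply Set.Subset.antisymm
  · rintro w ⟨cf, hrun, _⟩
    have hinit : (V2 k).initConf = ((0 : Fin 3), fun _ : Fin k => 0) := rfl
    rw [hinit] at hrun
    have := (CH2 hk w 0 (fun _ => 0) cf hrun).1 rfl
    rcases this with hcf | ⟨β, jm, mm, hw, hβ, hle⟩
    · exact mem_Lb_of_cfree hcf
    · refine ⟨β ++ List.replicate jm ABC.a, mm, by rw [hw], ?_, ?_⟩
      · exact cfree_append hβ (cfree_rep_a jm)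
      · rw [lastA_append_rep]
        simp at hle
        omega
  · exact Lb_sub_LangCover

end VASSAux
/- ====== The witness machine V1 : HD with LangCover = L1 ====== -/

namespace VASSAux

open VASS

variable {k : ℕ}

@[reducible] def V1 (k : ℕ) : VASS k ABC where
  n := 4
  trans := {t | t = (0, ABC.a, e1, 0) ∨ t = (0, ABC.b, -e1, 1) ∨ t = (0, ABC.b, 0, 2) ∨
    t = (1, ABC.b, -e1, 1) ∨ t = (1, ABC.b, 0, 2) ∨ t = (2, ABC.b, 0, 2) ∨
    t = (0, ABC.c, 0, 3) ∨ t = (1, ABC.c, 0, 3) ∨ t = (2, ABC.c, 0, 3)}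
  init := 0
  acc := {q | q = 0 ∨ q = 1 ∨ q = 3}

/-- The resolver for `V1`. -/
def r1 (k : ℕ) : (V1 k).Resolver := fun h x =>
  match x with
  | ABC.a => (e1, 0)
  | ABC.b => if h.count ABC.b < h.count ABC.a then (-e1, 1) else (0, 2)
  | ABC.c => (0, 3)

lemma resStep_some {A : Type} (V : VASS k A) (r : V.Resolver) (h : List A) (c : V.Conf) (x : A)
    (h1 : (c.1, x, (r h x).1, (r h x).2) ∈ V.trans)
    (h2 : ∀ i, 0 ≤ ((c.2 i : ℤ) + (r h x).1 i)) :
    V.resStep r (h, some c) x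
      = (h ++ [x], some ((r h x).2, fun i => ((c.2 i : ℤ) + (r h x).1 i).toNat)) := by
  simp [VASS.resStep, h1, h2]

lemma RA : ∀ (n : ℕ) (h : List ABC) (j : ℕ),
    (List.replicate n ABC.a).foldl ((V1 k).resStep (r1 k)) (h, some (0, vN j))
      = (h ++ List.replicate n ABC.a, some (0, vN (j + n))) := by
  intro n
  induction n with
  | zero => intro h j; simp
  | succ n ih =>
    intro h j
    rw [List.replicate_succ, List.foldl_cons]
    have hr : r1 k h ABC.a = (e1, (0 : Fin 4)) := rfl
    rw [resStep_some (V1 k) (r1 k) h (0, vN j) ABC.a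
      (by rw [hr]; simp [V1]) (by rw [hr]; exact nonneg_plus j)]
    rw [hr]
    simp only
    rw [upd_plus, ih]
    have : j + 1 + n = j + (n + 1) := by omega
    rw [this, List.append_assoc]
    rfl

lemma RB : ∀ (m : ℕ) (h : List ABC) (j : ℕ) (s₀ : Fin 4), (s₀ = 0 ∨ s₀ = 1) →
    h.count ABC.b + m ≤ h.count ABC.a → m ≤ j →
    (List.replicate m ABC.b).foldl ((V1 k).resStep (r1 k)) (h, some (s₀, vN j))
      = (h ++ List.replicate m ABC.b, some ((if m = 0 then s₀ else 1), vN (j - m))) := by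
  intro m
  induction m with
  | zero => intro h j s₀ _ _ _; simp
  | succ m ih =>
    intro h j s₀ hs₀ hcount hj
    rw [List.replicate_succ, List.foldl_cons]
    have hlt : h.count ABC.b < h.count ABC.a := by omega
    have hr : r1 k h ABC.b = (-e1, (1 : Fin 4)) := by
      simp [r1, hlt]
    have hj1 : 1 ≤ j := by omega
    have hmem : ((((s₀, vN j) : (V1 k).Conf)).1, ABC.b, (r1 k h ABC.b).1, (r1 k h ABC.b).2) ∈ (V1 k).trans := by
      rw [hr]
      rcases hs₀ with h0 | h0 <;> subst h0 <;> simp [V1]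
    rw [resStep_some (V1 k) (r1 k) h (s₀, vN j) ABC.b hmem
      (by rw [hr]; exact nonneg_minus hj1)]
    rw [hr]
    simp only
    rw [upd_minus hj1]
    have hcount' : (h ++ [ABC.b]).count ABC.b + m ≤ (h ++ [ABC.b]).count ABC.a := by
      simp [List.count_append]
      omega
    rw [ih (h ++ [ABC.b]) (j - 1) 1 (Or.inr rfl) hcount' (by omega)]
    have h1 : j - 1 - m = j - (m + 1) := by omega
    have h2 : (if m = 0 then (1 : Fin 4) else 1) = (if m + 1 = 0 then s₀ else 1) := by
      simp
    rw [h1, h2, List.append_assoc]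
    rfl

lemma RBR : ∀ (m : ℕ) (h : List ABC) (v : Fin k → ℕ) (s₀ : Fin 4),
    (s₀ = 0 ∨ s₀ = 1 ∨ s₀ = 2) → h.count ABC.a ≤ h.count ABC.b →
    (List.replicate m ABC.b).foldl ((V1 k).resStep (r1 k)) (h, some (s₀, v))
      = (h ++ List.replicate m ABC.b, some ((if m = 0 then s₀ else 2), v)) := by
  intro m
  induction m with
  | zero => intro h v s₀ _ _; simp
  | succ m ih =>
    intro h v s₀ hs₀ hcount
    rw [List.replicate_succ, List.foldl_cons]
    have hnlt : ¬ (h.count ABC.b < h.count ABC.a) := by omega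
    have hr : r1 k h ABC.b = (0, (2 : Fin 4)) := by
      simp [r1, hnlt]
    have hmem : ((((s₀, v) : (V1 k).Conf)).1, ABC.b, (r1 k h ABC.b).1, (r1 k h ABC.b).2) ∈ (V1 k).trans := by
      rw [hr]
      rcases hs₀ with h0 | h0 | h0 <;> subst h0 <;> simp [V1]
    rw [resStep_some (V1 k) (r1 k) h (s₀, v) ABC.b hmem
      (by rw [hr]; exact nonneg_zero v)]
    rw [hr]
    simp only
    rw [upd_zero]
    have hcount' : (h ++ [ABC.b]).count ABC.a ≤ (h ++ [ABC.b]).count ABC.b := by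
      simp [List.count_append]
      omega
    rw [ih (h ++ [ABC.b]) v 2 (Or.inr (Or.inr rfl)) hcount']
    have h2 : (if m = 0 then (2 : Fin 4) else 2) = (if m + 1 = 0 then s₀ else 2) := by
      simp
    rw [h2, List.append_assoc]
    rfl

lemma RC (h : List ABC) (v : Fin k → ℕ) (s₀ : Fin 4) (hs₀ : s₀ = 0 ∨ s₀ = 1 ∨ s₀ = 2) :
    ([ABC.c]).foldl ((V1 k).resStep (r1 k)) (h, some (s₀, v))
      = (h ++ [ABC.c], some (3, v)) := by
  rw [show ([ABC.c] : List ABC) = ABC.c :: [] from rfl, List.foldl_cons]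
  have hr : r1 k h ABC.c = (0, (3 : Fin 4)) := rfl
  have hmem : ((((s₀, v) : (V1 k).Conf)).1, ABC.c, (r1 k h ABC.c).1, (r1 k h ABC.c).2) ∈ (V1 k).trans := by
    rw [hr]
    rcases hs₀ with h0 | h0 | h0 <;> subst h0 <;> simp [V1]
  rw [resStep_some (V1 k) (r1 k) h (s₀, v) ABC.c hmem
    (by rw [hr]; exact nonneg_zero v)]
  rw [hr]
  simp only
  rw [upd_zero]
  rfl

lemma count_rep_a_a (n : ℕ) : (List.replicate n ABC.a).count ABC.a = n := by
  simp
lemma count_rep_a_b (n : ℕ) : (List.replicate n ABC.a).count ABC.b = 0 := by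
  simp [List.count_replicate]
lemma count_rep_b_b (n : ℕ) : (List.replicate n ABC.b).count ABC.b = n := by
  simp
lemma count_rep_b_a (n : ℕ) : (List.replicate n ABC.b).count ABC.a = 0 := by
  simp [List.count_replicate]

/-- The resolver accepts every word of `L1`. -/
lemma RES1 (w : List ABC) (hw : w ∈ L1) :
    ∃ c, (V1 k).resRun (r1 k) w = some c ∧ c.1 ∈ (V1 k).acc := by
  have hinit : (some ((V1 k).initConf) : Option (V1 k).Conf)
      = some (((0 : Fin 4), vN 0)) := by
    rw [show (V1 k).initConf = ((0 : Fin 4), fun _ : Fin k => 0) from rfl, init_vN (V1 k)]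
  rcases hw with ⟨n, m, rfl, hmn⟩ | ⟨n, m, rfl⟩
  · -- a^n b^m with m ≤ n
    rw [VASS.resRun, List.foldl_append]
    rw [show (([] : List ABC), some (V1 k).initConf) = (([] : List ABC), some ((0:Fin 4), vN 0))
      from by rw [hinit]]
    rw [RA, RB (m := m) (h := [] ++ List.replicate n ABC.a) (j := 0 + n) (s₀ := 0)
      (Or.inl rfl) (by simp [count_rep_a_b]; omega) (by omega)]
    refine ⟨_, rfl, ?_⟩
    rcases Nat.eq_zero_or_pos m with h0 | h0
    · subst h0; simp [V1]
    · have : (if m = 0 then (0:Fin 4) else 1) = 1 := by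
        rw [if_neg (by omega)]
      rw [this]
      simp [V1]
  · -- a^n b^m c
    rcases le_or_gt m n with hmn | hnm
    · rw [VASS.resRun, List.foldl_append, List.foldl_append]
      rw [show (([] : List ABC), some (V1 k).initConf) = (([] : List ABC), some ((0:Fin 4), vN 0))
        from by rw [hinit]]
      rw [RA, RB (m := m) (h := [] ++ List.replicate n ABC.a) (j := 0 + n) (s₀ := 0)
        (Or.inl rfl) (by simp [count_rep_a_b]; omega) (by omega)]
      rw [RC _ _ _ ?hs]
      case hs =>
        rcases Nat.eq_zero_or_pos m with h0 | h0
        · subst h0; simp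
        · right; left; rw [if_neg (by omega)]
      exact ⟨_, rfl, by simp [V1]⟩
    · -- m > n : go through state 2
      have hsplit : List.replicate m ABC.b
          = List.replicate n ABC.b ++ List.replicate (m - n) ABC.b := by
        rw [← List.replicate_add]
        congr 1
        omega
      rw [VASS.resRun, hsplit, List.foldl_append, List.foldl_append, List.foldl_append]
      rw [show (([] : List ABC), some (V1 k).initConf) = (([] : List ABC), some ((0:Fin 4), vN 0))
        from by rw [hinit]]
      rw [RA, RB (m := n) (h := [] ++ List.replicate n ABC.a) (j := 0 + n) (s₀ := 0)
        (Or.inl rfl) (by simp [count_rep_a_b]) (by omega)]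
      rw [RBR (m - n) _ _ _ ?hs1 ?hc1]
      case hs1 =>
        rcases Nat.eq_zero_or_pos n with h0 | h0
        · subst h0; simp
        · right; left; rw [if_neg (by omega)]
      case hc1 => simp [List.count_append, count_rep_a_b, count_rep_b_a]
      rw [RC _ _ _ ?hs2]
      case hs2 =>
        have : m - n ≠ 0 := by omega
        rw [if_neg this]
        right; right; rfl
      refine ⟨_, rfl, by simp [V1]⟩

end VASSAux
/- ====== characterization of V1 runs and L1 ====== -/

namespace VASSAux

open VASS

variable {k : ℕ}

lemma CH1 (hk : 0 < k) :
    ∀ (w : List ABC) (q : Fin 4) (v : Fin k → ℕ) (cf : (V1 k).Conf),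
      (V1 k).Run (q, v) w cf → cf.1 ∈ (V1 k).acc →
      (q = 0 → (∃ n m : ℕ, w = List.replicate n ABC.a ++ List.replicate m ABC.b ∧
          m ≤ v ⟨0, hk⟩ + n) ∨
        (∃ n m : ℕ, w = List.replicate n ABC.a ++ List.replicate m ABC.b ++ [ABC.c])) ∧
      (q = 1 → (∃ m : ℕ, w = List.replicate m ABC.b ∧ m ≤ v ⟨0, hk⟩) ∨
        (∃ m : ℕ, w = List.replicate m ABC.b ++ [ABC.c])) ∧
      (q = 2 → ∃ m : ℕ, w = List.replicate m ABC.b ++ [ABC.c]) ∧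
      (q = 3 → w = []) := by
  intro w
  induction w with
  | nil =>
    intro q v cf hrun hacc
    cases hrun
    refine ⟨fun _ => Or.inl ⟨0, 0, by simp, by simp⟩,
      fun _ => Or.inl ⟨0, by simp, by simp⟩, fun h2 => ?_, fun _ => rfl⟩
    exfalso
    subst h2
    simp [V1] at hacc
  | cons x w ih =>
    intro q v cf hrun hacc
    cases hrun with
    | @cons _ _ _ d q' _ _ mem nonneg rest =>
      have IH := ih q' (fun i => ((v i : ℤ) + d i).toNat) cf rest hacc
      simp only [V1, Set.mem_setOf_eq, Prod.mk.injEq] at mem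
      rcases mem with ⟨hq, hx, hd, hq'⟩ | ⟨hq, hx, hd, hq'⟩ | ⟨hq, hx, hd, hq'⟩ |
        ⟨hq, hx, hd, hq'⟩ | ⟨hq, hx, hd, hq'⟩ | ⟨hq, hx, hd, hq'⟩ |
        ⟨hq, hx, hd, hq'⟩ | ⟨hq, hx, hd, hq'⟩ | ⟨hq, hx, hd, hq'⟩ <;>
        subst hq <;> subst hx <;> subst hd <;> subst hq'
      -- (0, a, e1, 0)
      · refine ⟨fun _ => ?_, fun h => absurd h (by decide), fun h => absurd h (by decide),
          fun h => absurd h (by decide)⟩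
        have hv : (fun i => ((v i : ℤ) + e1 i).toNat) ⟨0, hk⟩ = v ⟨0, hk⟩ + 1 := by
          simp [e1]
        rcases IH.1 rfl with ⟨n, m, hw, hle⟩ | ⟨n, m, hw⟩
        · left
          beta_reduce at hv; rw [hv] at hle
          exact ⟨n + 1, m, by rw [hw]; simp [List.replicate_succ], by omega⟩
        · right
          exact ⟨n + 1, m, by rw [hw]; simp [List.replicate_succ]⟩
      -- (0, b, -e1, 1)
      · refine ⟨fun _ => ?_, fun h => absurd h (by decide), fun h => absurd h (by decide),
          fun h => absurd h (by decide)⟩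
        have hpos : 1 ≤ v ⟨0, hk⟩ := by
          have := nonneg ⟨0, hk⟩
          simp [e1] at this
          omega
        have hv : (fun i => ((v i : ℤ) + (-e1) i).toNat) ⟨0, hk⟩ = v ⟨0, hk⟩ - 1 := by
          simp [e1]; omega
        rcases IH.2.1 rfl with ⟨m, hw, hle⟩ | ⟨m, hw⟩
        · left
          beta_reduce at hv; rw [hv] at hle
          exact ⟨0, m + 1, by rw [hw]; simp [List.replicate_succ], by omega⟩
        · right
          exact ⟨0, m + 1, by rw [hw]; simp [List.replicate_succ]⟩
      -- (0, b, 0, 2)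
      · refine ⟨fun _ => ?_, fun h => absurd h (by decide), fun h => absurd h (by decide),
          fun h => absurd h (by decide)⟩
        rw [show ((v ⟨0, hk⟩ : ℤ) + (0 : Fin k → ℤ) ⟨0, hk⟩).toNat = v ⟨0, hk⟩ by simp] at IH
        obtain ⟨m, hw⟩ := IH.2.2.1 rfl
        right
        exact ⟨0, m + 1, by rw [hw]; simp [List.replicate_succ]⟩
      -- (1, b, -e1, 1)
      · refine ⟨fun h => absurd h (by decide), fun _ => ?_, fun h => absurd h (by decide),
          fun h => absurd h (by decide)⟩
        have hpos : 1 ≤ v ⟨0, hk⟩ := by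
          have := nonneg ⟨0, hk⟩
          simp [e1] at this
          omega
        have hv : (fun i => ((v i : ℤ) + (-e1) i).toNat) ⟨0, hk⟩ = v ⟨0, hk⟩ - 1 := by
          simp [e1]; omega
        rcases IH.2.1 rfl with ⟨m, hw, hle⟩ | ⟨m, hw⟩
        · left
          beta_reduce at hv; rw [hv] at hle
          exact ⟨m + 1, by rw [hw]; simp [List.replicate_succ], by omega⟩
        · right
          exact ⟨m + 1, by rw [hw]; simp [List.replicate_succ]⟩
      -- (1, b, 0, 2)
      · refine ⟨fun h => absurd h (by decide), fun _ => ?_, fun h => absurd h (by decide),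
          fun h => absurd h (by decide)⟩
        rw [show ((v ⟨0, hk⟩ : ℤ) + (0 : Fin k → ℤ) ⟨0, hk⟩).toNat = v ⟨0, hk⟩ by simp] at IH
        obtain ⟨m, hw⟩ := IH.2.2.1 rfl
        right
        exact ⟨m + 1, by rw [hw]; simp [List.replicate_succ]⟩
      -- (2, b, 0, 2)
      · refine ⟨fun h => absurd h (by decide), fun h => absurd h (by decide), fun _ => ?_,
          fun h => absurd h (by decide)⟩
        rw [show ((v ⟨0, hk⟩ : ℤ) + (0 : Fin k → ℤ) ⟨0, hk⟩).toNat = v ⟨0, hk⟩ by simp] at IH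
        obtain ⟨m, hw⟩ := IH.2.2.1 rfl
        exact ⟨m + 1, by rw [hw]; simp [List.replicate_succ]⟩
      -- (0, c, 0, 3)
      · refine ⟨fun _ => ?_, fun h => absurd h (by decide), fun h => absurd h (by decide),
          fun h => absurd h (by decide)⟩
        rw [show ((v ⟨0, hk⟩ : ℤ) + (0 : Fin k → ℤ) ⟨0, hk⟩).toNat = v ⟨0, hk⟩ by simp] at IH
        have hw := IH.2.2.2 rfl
        right
        exact ⟨0, 0, by rw [hw]; simp⟩
      -- (1, c, 0, 3)
      · refine ⟨fun h => absurd h (by decide), fun _ => ?_, fun h => absurd h (by decide),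
          fun h => absurd h (by decide)⟩
        rw [show ((v ⟨0, hk⟩ : ℤ) + (0 : Fin k → ℤ) ⟨0, hk⟩).toNat = v ⟨0, hk⟩ by simp] at IH
        have hw := IH.2.2.2 rfl
        right
        exact ⟨0, by rw [hw]; simp⟩
      -- (2, c, 0, 3)
      · refine ⟨fun h => absurd h (by decide), fun h => absurd h (by decide), fun _ => ?_,
          fun h => absurd h (by decide)⟩
        rw [show ((v ⟨0, hk⟩ : ℤ) + (0 : Fin k → ℤ) ⟨0, hk⟩).toNat = v ⟨0, hk⟩ by simp] at IH
        have hw := IH.2.2.2 rfl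
        exact ⟨0, by rw [hw]; simp⟩

lemma LangCover_V1 (hk : 0 < k) : (V1 k).LangCover = L1 := by
  apply Set.Subset.antisymm
  · rintro w ⟨cf, hrun, hacc⟩
    have hinit : (V1 k).initConf = ((0 : Fin 4), fun _ : Fin k => 0) := rfl
    rw [hinit] at hrun
    have := (CH1 hk w 0 (fun _ => 0) cf hrun hacc).1 rfl
    rcases this with ⟨n, m, hw, hle⟩ | ⟨n, m, hw⟩
    · exact Or.inl ⟨n, m, hw, by simpa using hle⟩
    · exact Or.inr ⟨n, m, hw⟩
  · intro w hw
    obtain ⟨c, hc, hacc⟩ := RES1 (k := k) w hw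
    exact ⟨c, res_run_of_some hc, hacc⟩

lemma HDCover_V1 (hk : 0 < k) : (V1 k).HDCover := by
  refine ⟨r1 k, fun w hw => ?_⟩
  rw [LangCover_V1 hk] at hw
  exact RES1 w hw

/- ====== L1 facts and non-determinizability ====== -/

lemma L1_repa (n : ℕ) : List.replicate n ABC.a ∈ L1 :=
  Or.inl ⟨n, 0, by simp, Nat.zero_le n⟩

lemma L1_ab {n N : ℕ} (h : n ≤ N) :
    List.replicate N ABC.a ++ List.replicate n ABC.b ∈ L1 :=
  Or.inl ⟨N, n, rfl, h⟩

lemma L1_abc (n m : ℕ) :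
    List.replicate n ABC.a ++ List.replicate m ABC.b ++ [ABC.c] ∈ L1 :=
  Or.inr ⟨n, m, rfl⟩

lemma L1_not_ab (n : ℕ) :
    List.replicate n ABC.a ++ List.replicate (n + 1) ABC.b ∉ L1 := by
  intro h
  rcases h with ⟨n', m', heq, hle⟩ | ⟨n', m', heq⟩
  · have ha := congrArg (List.count ABC.a) heq
    have hb := congrArg (List.count ABC.b) heq
    simp [List.count_append, count_rep_a_a, count_rep_a_b, count_rep_b_a, count_rep_b_b] at ha hb
    omega
  · have hc := congrArg (List.count ABC.c) heq
    simp [List.count_append, List.count_replicate] at hc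

theorem L1_not_det (V : VASS k ABC) (hdet : V.Det) (hL : V.LangCover = L1) : False := by
  have hrun : ∀ n : ℕ, ∃ co, V.Run V.initConf (List.replicate n ABC.a) co := by
    intro n
    have : List.replicate n ABC.a ∈ V.LangCover := by rw [hL]; exact L1_repa n
    obtain ⟨cf, h, _⟩ := this
    exact ⟨cf, h⟩
  set X : ℕ → V.Conf := fun n => (hrun n).choose with hXdef
  have hX : ∀ n, V.Run V.initConf (List.replicate n ABC.a) (X n) := fun n => (hrun n).choose_spec
  obtain ⟨i, j, l, hij, hjl, hs1, _, hmono, _⟩ := extract X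
  -- the unique run on a^i b^(i+1) (which exists because a^i b^(i+1) c ∈ L1)
  have h1 : List.replicate i ABC.a ++ List.replicate (i+1) ABC.b ++ [ABC.c] ∈ V.LangCover := by
    rw [hL]; exact L1_abc i (i+1)
  obtain ⟨cf, hrun1, _⟩ := h1
  rw [List.append_assoc] at hrun1
  obtain ⟨y, ra, rbc⟩ := run_split _ hrun1
  obtain ⟨z, rb, _⟩ := run_split _ rbc
  have hy : y = X i := run_unique hdet _ ra (hX i)
  subst hy
  have hznacc : z.1 ∉ V.acc := by
    intro hz
    have : List.replicate i ABC.a ++ List.replicate (i+1) ABC.b ∈ V.LangCover :=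
      ⟨z, run_append ra rb, hz⟩
    rw [hL] at this
    exact L1_not_ab i this
  -- shift the b-run up to X j
  set D : Fin k → ℕ := fun x => (X j).2 x - (X i).2 x with hD
  have hXj : X j = ((X i).1, fun x => (X i).2 x + D x) := by
    refine Prod.ext hs1.symm ?_
    funext x
    have := hmono x
    simp only [hD]
    omega
  have rbshift := run_shift (V := V) D rb
  rw [← hXj] at rbshift
  -- the accepting run on a^j b^(i+1)
  have h2 : List.replicate j ABC.a ++ List.replicate (i+1) ABC.b ∈ V.LangCover := by
    rw [hL]; exact L1_ab (by omega)
  obtain ⟨cf2, hrun2, hacc2⟩ := h2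
  obtain ⟨y2, ra2, rb2⟩ := run_split _ hrun2
  have hy2 : y2 = X j := run_unique hdet _ ra2 (hX j)
  subst hy2
  have : cf2 = (z.1, fun x => z.2 x + D x) := run_unique hdet _ rb2 rbshift
  rw [this] at hacc2
  exact hznacc hacc2

end VASSAux
/-- For every `k ≥ 1`, deterministic ⊊ history-deterministic ⊊ nondeterministic
for `k`-VASS languages under coverability acceptance. -/
theorem stmt14 : ∀ k : ℕ, 1 ≤ k → DetC k ⊂ HDC k ∧ HDC k ⊂ NC k := by
  intro k hk
  have hk' : 0 < k := hk
  constructor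
  · rw [Set.ssubset_def]
    constructor
    · rintro L ⟨V, hdet, hL⟩
      exact ⟨V, VASSAux.det_HDCover hdet, hL⟩
    · intro hsub
      have h1 : VASSAux.L1 ∈ HDC k :=
        ⟨VASSAux.V1 k, VASSAux.HDCover_V1 hk', VASSAux.LangCover_V1 hk'⟩
      obtain ⟨V, hdet, hL⟩ := hsub h1
      exact VASSAux.L1_not_det V hdet hL
  · rw [Set.ssubset_def]
    constructor
    · rintro L ⟨V, _, hL⟩
      exact ⟨V, hL⟩
    · intro hsub
      have h1 : VASSAux.Lb ∈ NC k := ⟨VASSAux.V2 k, VASSAux.LangCover_V2 hk'⟩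
      obtain ⟨V, hHD, hL⟩ := hsub h1
      exact VASSAux.Lb_not_HD V hL hHD
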